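/- With error rate e = 0, the largely accepted consensus constraint coincides with the most specific constraint: lac_0(N) = msc(N). -/
import Mathlib


/-- The `p`-neighbours of node `n` in the RDF graph `G` (a finite set of triples). -/
def nbrs {V P : Type*} [DecidableEq V] [DecidableEq P]
    (G : Finset (V × P × V)) (n : V) (p : P) : Finset V :=
  (G.filter fun t => t.1 = n ∧ t.2.1 = p).image fun t => t.2.2

/-- The four uniform cardinality intervals, as sets of naturals. -/
def UniformK : Set (Set ℕ) :=
  {Set.univ, {0, 1}, {1}, {n : ℕ | 1 ≤ n}}

/-- The cardinality vote of a node with `m` `p`-neighbours: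
`{0;1}` if `m = 0`, `{1;1}` if `m = 1`, `{1;*}` if `m > 1`. -/
def fK (m : ℕ) : Set ℕ :=
  if m = 0 then {0, 1} else if m = 1 then {1} else {n : ℕ | 1 ≤ n}

/-- With error rate `e = 0` (threshold `t = 1`, where consensus is the join of all
votes), the largely accepted consensus constraint coincides with the most specific
constraint: `lac_0(N) = msc(N)`.  For a predicate `p` of `N`:  the `msc` value
constraint `VM` is the join of the singleton constraints of all `p`-neighbours of
`N` and the `msc` cardinality `CM` is the least uniform interval containing the
multiplicities; the `lac_0` value constraint `VL` is the join over the nodes of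
`N` having a `p`-neighbour of their votes `vF n` (each the join of the singletons
of that node's `p`-neighbours), and the `lac_0` cardinality `CL` is the join in
`K` of the cardinality votes `fK`.  Then `VL = VM` and `CL = CM`. -/
theorem lac_zero_eq_msc {V P F : Type*} [DecidableEq V] [DecidableEq P]
    [SemilatticeSup F] [OrderTop F]
    (G : Finset (V × P × V)) (N : Finset V) (hN : N.Nonempty)
    (sing : V → F) (p : P)
    (hp : ∃ n ∈ N, (nbrs G n p).Nonempty)  -- p ∈ props(N)
    (VM : F) (hVM : IsLUB {x : F | ∃ n ∈ N, ∃ v ∈ nbrs G n p, x = sing v} VM)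
    (CM : Set ℕ) (hCMK : CM ∈ UniformK)
    (hCMmem : ∀ n ∈ N, (nbrs G n p).card ∈ CM)
    (hCMleast : ∀ k ∈ UniformK, (∀ n ∈ N, (nbrs G n p).card ∈ k) → CM ⊆ k)
    (vF : V → F)
    (hvF : ∀ n ∈ N, (nbrs G n p).Nonempty →
      IsLUB {x : F | ∃ v ∈ nbrs G n p, x = sing v} (vF n))
    (VL : F) (hVL : IsLUB {x : F | ∃ n ∈ N, (nbrs G n p).Nonempty ∧ x = vF n} VL)
    (CL : Set ℕ) (hCLK : CL ∈ UniformK)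
    (hCLub : ∀ n ∈ N, fK (nbrs G n p).card ⊆ CL)
    (hCLleast : ∀ k ∈ UniformK, (∀ n ∈ N, fK (nbrs G n p).card ⊆ k) → CL ⊆ k) :
    VL = VM ∧ CL = CM := by
  constructor
  · -- VL = VM : same upper bounds
    have hub : upperBounds {x : F | ∃ n ∈ N, (nbrs G n p).Nonempty ∧ x = vF n}
        = upperBounds {x : F | ∃ n ∈ N, ∃ v ∈ nbrs G n p, x = sing v} := by
      ext x
      constructor
      · rintro hx y ⟨n, hn, v, hv, rfl⟩
        have hne : (nbrs G n p).Nonempty := ⟨v, hv⟩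
        have h1 : sing v ≤ vF n := (hvF n hn hne).1 ⟨v, hv, rfl⟩
        exact h1.trans (hx ⟨n, hn, hne, rfl⟩)
      · rintro hx y ⟨n, hn, hne, rfl⟩
        exact (hvF n hn hne).2 fun z ⟨v, hv, hz⟩ => hx ⟨n, hn, v, hv, hz⟩
    rw [IsLUB, IsLeast, hub] at hVL
    exact IsLUB.unique hVL hVM
  · -- CL = CM
    have hmem_fK : ∀ m : ℕ, m ∈ fK m := by
      intro m
      unfold fK
      rcases Nat.lt_trichotomy m 1 with h | h | h
      · interval_cases m <;> simp
      · subst h; simp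
      · have h0 : m ≠ 0 := by omega
        have h1 : m ≠ 1 := by omega
        simp [h0, h1]; omega
    have hsub : ∀ k ∈ UniformK, ∀ m : ℕ, m ∈ k → fK m ⊆ k := by
      intro k hk m hm
      unfold fK
      rcases hk with rfl | rfl | rfl | rfl
      · intro x _; trivial
      · rcases hm with rfl | rfl
        · simp
        · intro x hx; simp at hx ⊢; right; exact hx
      · rcases hm with rfl
        · intro x hx; simpa using hx
      · have h0 : m ≠ 0 := by simp at hm; omega
        by_cases h1 : m = 1
        · subst h1; intro x hx; simp [h0] at hx; simp [hx]
        · simp [h0, h1]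
    apply Set.Subset.antisymm
    · exact hCLleast CM hCMK fun n hn => hsub CM hCMK _ (hCMmem n hn)
    · exact hCMleast CL hCLK fun n hn => hCLub n hn (hmem_fK _)
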